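/- The invertibility of R→ in G3iM^w holds as well: if Γ ⇒ φ→ψ is derivable then Γ, φ ⇒ ψ is derivable. -/

import Mathlib

/-- Formulas of intuitionistic (monotone) modal logic over atoms `ℕ`,
with conjunction, disjunction, implication, falsum and a box modality. -/
inductive Fm : Type where
  | atom : ℕ → Fm
  | bot  : Fm
  | and  : Fm → Fm → Fm
  | or   : Fm → Fm → Fm
  | imp  : Fm → Fm → Fm
  | box  : Fm → Fm
deriving DecidableEq

/-- `⊤` as the abbreviation `⊥ → ⊥`. -/
def Fm.top : Fm := Fm.imp Fm.bot Fm.bot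
/-- The sequent calculus `G3iM^w` for intuitionistic monotone modal logic:
single-conclusion sequents with a multiset antecedent. -/
inductive G3 : Multiset Fm → Fm → Prop
  | ax (Γ : Multiset Fm) (p : ℕ) : G3 (Fm.atom p ::ₘ Γ) (Fm.atom p)
  | lbot (Γ : Multiset Fm) (φ : Fm) : G3 (Fm.bot ::ₘ Γ) φ
  | land (Γ : Multiset Fm) (φ ψ θ : Fm) :
      G3 (φ ::ₘ ψ ::ₘ Γ) θ → G3 (φ.and ψ ::ₘ Γ) θ
  | rand (Γ : Multiset Fm) (φ ψ : Fm) : G3 Γ φ → G3 Γ ψ → G3 Γ (φ.and ψ)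
  | lor (Γ : Multiset Fm) (φ ψ θ : Fm) :
      G3 (φ ::ₘ Γ) θ → G3 (ψ ::ₘ Γ) θ → G3 (φ.or ψ ::ₘ Γ) θ
  | ror₁ (Γ : Multiset Fm) (φ ψ : Fm) : G3 Γ φ → G3 Γ (φ.or ψ)
  | ror₂ (Γ : Multiset Fm) (φ ψ : Fm) : G3 Γ ψ → G3 Γ (φ.or ψ)
  | limp (Γ : Multiset Fm) (φ ψ θ : Fm) :
      G3 (φ.imp ψ ::ₘ Γ) φ → G3 (ψ ::ₘ Γ) θ → G3 (φ.imp ψ ::ₘ Γ) θ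
  | rimp (Γ : Multiset Fm) (φ ψ : Fm) : G3 (φ ::ₘ Γ) ψ → G3 Γ (φ.imp ψ)
  | m (Γ : Multiset Fm) (φ ψ : Fm) : G3 {φ} ψ → G3 (φ.box ::ₘ Γ) (ψ.box)

theorem G3.weaken (χ : Fm) {Γ : Multiset Fm} {θ : Fm} (h : G3 Γ θ) : G3 (χ ::ₘ Γ) θ := by
  induction h with
  | ax Γ p => rw [Multiset.cons_swap]; exact G3.ax _ p
  | lbot Γ φ => rw [Multiset.cons_swap]; exact G3.lbot _ _
  | land Γ φ ψ θ _ ih =>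
      rw [Multiset.cons_swap]
      refine G3.land _ _ _ _ ?_
      rwa [Multiset.cons_swap ψ χ, Multiset.cons_swap φ χ]
  | rand Γ φ ψ _ _ ih₁ ih₂ => exact G3.rand _ _ _ ih₁ ih₂
  | lor Γ φ ψ θ _ _ ih₁ ih₂ =>
      rw [Multiset.cons_swap]
      rw [Multiset.cons_swap] at ih₁ ih₂
      exact G3.lor _ _ _ _ ih₁ ih₂
  | ror₁ Γ φ ψ _ ih => exact G3.ror₁ _ _ _ ih
  | ror₂ Γ φ ψ _ ih => exact G3.ror₂ _ _ _ ih
  | limp Γ φ ψ θ _ _ ih₁ ih₂ =>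
      rw [Multiset.cons_swap]
      rw [Multiset.cons_swap] at ih₁ ih₂
      exact G3.limp _ _ _ _ ih₁ ih₂
  | rimp Γ φ ψ _ ih =>
      rw [Multiset.cons_swap] at ih
      exact G3.rimp _ _ _ ih
  | m Γ φ ψ h _ => rw [Multiset.cons_swap]; exact G3.m _ _ _ h

/-- Left rules commute with the inversion; the left premise of `L→` only needs weakening. -/
theorem G3.rimp_inv {Γ : Multiset Fm} {θ : Fm} (h : G3 Γ θ) :
    ∀ {φ ψ : Fm}, θ = φ.imp ψ → G3 (φ ::ₘ Γ) ψ := by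
  induction h with
  | ax | rand | ror₁ | ror₂ | m => intro _ _ hθ; cases hθ
  | lbot Γ θ => intro φ ψ _; rw [Multiset.cons_swap]; exact G3.lbot _ _
  | land Γ φ' ψ' θ _ ih =>
      intro φ ψ hθ
      rw [Multiset.cons_swap]
      refine G3.land _ _ _ _ ?_
      rw [Multiset.cons_swap ψ' φ, Multiset.cons_swap φ' φ]
      exact ih hθ
  | lor Γ φ' ψ' θ _ _ ih₁ ih₂ =>
      intro φ ψ hθ
      have h₁ := ih₁ hθ
      have h₂ := ih₂ hθ
      rw [Multiset.cons_swap] at h₁ h₂ ⊢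
      exact G3.lor _ _ _ _ h₁ h₂
  | limp Γ φ' ψ' θ hφ' _ _ ih =>
      intro φ ψ hθ
      have hψ' := ih hθ
      rw [Multiset.cons_swap] at hψ' ⊢
      exact G3.limp _ _ _ _ (by rw [Multiset.cons_swap]; exact hφ'.weaken φ) hψ'
  | rimp Γ φ' ψ' h _ =>
      rintro φ ψ ⟨⟩
      exact h

/-- Invertibility of `R→` in `G3iM^w`. -/
theorem g3_rimp_inversion (Γ : Multiset Fm) (φ ψ : Fm)
    (h : G3 Γ (φ.imp ψ)) : G3 (φ ::ₘ Γ) ψ :=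
  h.rimp_inv rfl
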